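/- arXiv:quant-ph/0610263 — 6 statements merged into one kernel-verified Lean document; each statement's English description precedes it below -/
import Mathlib

section
/- The symplectic eigenvalues of a Williamson normal form are unique up to permutation: if A is a real symmetric positive definite 2N×2N matrix and S₁, S₂ ∈ Sp(2N,ℝ) and positive reals a₁,…,a_N and b₁,…,b_N satisfy S₁ A S₁ᵀ = diag(a₁,a₁,…,a_N,a_N) and S₂ A S₂ᵀ = diag(b₁,b₁,…,b_N,b_N), then there is a permutation π of {1,…,N} with b_i = a_{π(i)} for all i. -/
open Matrix Polynomial
open ComplexOrder

noncomputable section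

/-- The standard symplectic form matrix: block diagonal with 2×2 blocks [[0,1],[-1,0]]. -/
def symplForm (n : ℕ) : Matrix (Fin n) (Fin n) ℝ :=
  Matrix.of fun i j =>
    if (i : ℕ) + 1 = (j : ℕ) ∧ (i : ℕ) % 2 = 0 then 1
    else if (j : ℕ) + 1 = (i : ℕ) ∧ (j : ℕ) % 2 = 0 then -1 else 0

/-- Membership in the real symplectic group: `S σ Sᵀ = σ`. -/
def IsSymplectic {n : ℕ} (S : Matrix (Fin n) (Fin n) ℝ) : Prop :=
  S * symplForm n * Sᵀ = symplForm n

/-- The Williamson diagonal matrix `diag(a₁,a₁,…,a_N,a_N)`. -/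
def WDiag {N : ℕ} (a : Fin N → ℝ) : Matrix (Fin (2 * N)) (Fin (2 * N)) ℝ :=
  Matrix.diagonal fun i => a ⟨(i : ℕ) / 2, by have := i.isLt; omega⟩

/-- A covariance matrix: real symmetric with `γ + iσ` positive semidefinite. -/
def IsCovMatrix {n : ℕ} (γ : Matrix (Fin n) (Fin n) ℝ) : Prop :=
  γ.IsSymm ∧
    (γ.map (Complex.ofReal) + Complex.I • (symplForm n).map Complex.ofReal).PosSemidef

/-- The block-diagonal direct sum of two square matrices. -/
def dirSum {m n : ℕ} (A : Matrix (Fin m) (Fin m) ℝ) (B : Matrix (Fin n) (Fin n) ℝ) :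
    Matrix (Fin (m + n)) (Fin (m + n)) ℝ :=
  Matrix.reindex finSumFinEquiv finSumFinEquiv (Matrix.fromBlocks A 0 0 B)

/-- Separability of a covariance matrix with respect to the split `A|B`. -/
def IsSepCov (nA nB : ℕ) (γ : Matrix (Fin (nA + nB)) (Fin (nA + nB)) ℝ) : Prop :=
  ∃ (γA : Matrix (Fin nA) (Fin nA) ℝ) (γB : Matrix (Fin nB) (Fin nB) ℝ),
    IsCovMatrix γA ∧ IsCovMatrix γB ∧ (γ - dirSum γA γB).PosSemidef

/-!
A symplectic `S` has `det S = ±1` and satisfies `S σ Sᵀ = σ`, so `S (A + tσ) Sᵀ = S A Sᵀ + tσ`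
and `det (A + tσ)` is unchanged when `A` is replaced by `S A Sᵀ`. For the Williamson form this
determinant splits into `2 × 2` blocks and equals `∏ᵢ (aᵢ² + t²)`. Hence `∏ᵢ (x + aᵢ²)` and
`∏ᵢ (x + bᵢ²)` agree for all `x ≥ 0`, so they are the same polynomial, whose roots give
`{aᵢ²} = {bᵢ²}` as multisets; positivity then gives `{aᵢ} = {bᵢ}`.
-/

def finPairEquiv (N : ℕ) : Fin 2 × Fin N ≃ Fin (2 * N) :=
  (Equiv.prodComm _ _).trans (finProdFinEquiv.trans (finCongr (Nat.mul_comm N 2)))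

@[simp]
lemma finPairEquiv_apply_val {N : ℕ} (r : Fin 2) (q : Fin N) :
    (finPairEquiv N (r, q) : ℕ) = r + 2 * q := by
  simp [finPairEquiv]

lemma WDiag_add_smul_symplForm {N : ℕ} (a : Fin N → ℝ) (t : ℝ) :
    WDiag a + t • symplForm (2 * N) =
      reindex (finPairEquiv N) (finPairEquiv N)
        (blockDiagonal fun q => !![a q, t; -t, a q]) := by
  ext i j
  obtain ⟨⟨r, q⟩, rfl⟩ := (finPairEquiv N).surjective i
  obtain ⟨⟨r', q'⟩, rfl⟩ := (finPairEquiv N).surjective j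
  simp only [Matrix.add_apply, Matrix.smul_apply, WDiag, diagonal_apply,
    EmbeddingLike.apply_eq_iff_eq, reindex_apply, submatrix_apply, Equiv.symm_apply_apply,
    blockDiagonal_apply, symplForm, of_apply, Fin.ext_iff, finPairEquiv_apply_val, smul_eq_mul]
  fin_cases r <;> fin_cases r' <;> simp <;> split_ifs <;>
    first
      | omega
      | exact congrArg a (Fin.ext (by simp only; omega))
      | simp_all

lemma det_WDiag_add_smul_symplForm {N : ℕ} (a : Fin N → ℝ) (t : ℝ) :
    (WDiag a + t • symplForm (2 * N)).det = ∏ q, (a q ^ 2 + t ^ 2) := by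
  rw [WDiag_add_smul_symplForm, det_reindex_self, det_blockDiagonal]
  exact Finset.prod_congr rfl fun q _ => by rw [det_fin_two_of]; ring

lemma det_symplForm (N : ℕ) : (symplForm (2 * N)).det = 1 := by
  simpa [WDiag] using det_WDiag_add_smul_symplForm (0 : Fin N → ℝ) 1

lemma IsSymplectic.det_sq {N : ℕ} {S : Matrix (Fin (2 * N)) (Fin (2 * N)) ℝ}
    (hS : IsSymplectic S) : S.det ^ 2 = 1 := by
  have h := congrArg det hS
  rw [det_mul, det_mul, det_transpose, det_symplForm] at h
  linear_combination h

lemma IsSymplectic.det_mul_mul_transpose_add_smul_symplForm {N : ℕ}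
    {S : Matrix (Fin (2 * N)) (Fin (2 * N)) ℝ} (hS : IsSymplectic S)
    (A : Matrix (Fin (2 * N)) (Fin (2 * N)) ℝ) (t : ℝ) :
    (S * A * Sᵀ + t • symplForm (2 * N)).det = (A + t • symplForm (2 * N)).det := by
  have hcongr : S * A * Sᵀ + t • symplForm (2 * N) = S * (A + t • symplForm (2 * N)) * Sᵀ := by
    rw [Matrix.mul_add, Matrix.add_mul, Matrix.mul_smul, Matrix.smul_mul, hS]
  rw [hcongr, det_mul, det_mul, det_transpose]
  linear_combination (A + t • symplForm (2 * N)).det * hS.det_sq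

lemma map_univ_val_eq_of_prod_sub_eq {R ι : Type*} [CommRing R] [IsDomain R] [Fintype ι]
    {c d : ι → R} {s : Set R} (hs : s.Infinite) (h : ∀ x ∈ s, ∏ i, (x - c i) = ∏ i, (x - d i)) :
    Finset.univ.val.map c = Finset.univ.val.map d := by
  have hpoly : ((Finset.univ.val.map c).map fun x => X - C x).prod =
      ((Finset.univ.val.map d).map fun x => X - C x).prod := by
    refine eq_of_infinite_eval_eq _ _ (hs.mono fun x hx => ?_)
    simpa [Multiset.map_map, Finset.prod_map_val, eval_prod] using h x hx
  simpa only [roots_multiset_prod_X_sub_C] using congrArg roots hpoly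

lemma map_univ_val_eq_of_prod_sq_add_sq_eq {ι : Type*} [Fintype ι] {a b : ι → ℝ}
    (ha : ∀ i, 0 ≤ a i) (hb : ∀ i, 0 ≤ b i)
    (h : ∀ t, ∏ i, (a i ^ 2 + t ^ 2) = ∏ i, (b i ^ 2 + t ^ 2)) :
    Finset.univ.val.map a = Finset.univ.val.map b := by
  have hsq :
      Finset.univ.val.map (fun i => -a i ^ 2) = Finset.univ.val.map (fun i => -b i ^ 2) := by
    refine map_univ_val_eq_of_prod_sub_eq (Set.Ici_infinite 0) fun x (hx : 0 ≤ x) => ?_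
    simpa only [Real.sq_sqrt hx, sub_neg_eq_add, add_comm x] using h √x
  have hsqrt := congrArg (Multiset.map fun y => √(-y)) hsq
  simp only [Multiset.map_map, Function.comp_def, neg_neg] at hsqrt
  simpa only [Real.sqrt_sq (ha _), Real.sqrt_sq (hb _)] using hsqrt

lemma exists_perm_eq_comp_of_map_univ_val_eq {ι α : Type*} [Fintype ι] {a b : ι → α}
    (h : Finset.univ.val.map a = Finset.univ.val.map b) :
    ∃ π : Equiv.Perm ι, ∀ i, b i = a (π i) := by
  classical
  have hfiber (x : α) : Fintype.card {i // b i = x} = Fintype.card {i // a i = x} := by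
    have hcount := congrArg (Multiset.count x) h
    simp only [Multiset.count_map, Fintype.card_subtype, Finset.card_def, Finset.filter_val,
      eq_comm] at hcount ⊢
    exact hcount
  exact ⟨Equiv.ofFiberEquiv fun x => Fintype.equivOfCardEq (hfiber x),
    fun i => (Equiv.ofFiberEquiv_map _ i).symm⟩

theorem williamson_eigenvalues_unique_general (N : ℕ)
    (A : Matrix (Fin (2 * N)) (Fin (2 * N)) ℝ)
    (S₁ S₂ : Matrix (Fin (2 * N)) (Fin (2 * N)) ℝ) (a b : Fin N → ℝ)
    (hS₁ : IsSymplectic S₁) (hS₂ : IsSymplectic S₂)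
    (ha : ∀ i, 0 < a i) (hb : ∀ i, 0 < b i)
    (h₁ : S₁ * A * S₁ᵀ = WDiag a) (h₂ : S₂ * A * S₂ᵀ = WDiag b) :
    ∃ π : Equiv.Perm (Fin N), ∀ i, b i = a (π i) := by
  have hchar (t : ℝ) : ∏ i, (a i ^ 2 + t ^ 2) = ∏ i, (b i ^ 2 + t ^ 2) := by
    rw [← det_WDiag_add_smul_symplForm, ← det_WDiag_add_smul_symplForm, ← h₁, ← h₂,
      hS₁.det_mul_mul_transpose_add_smul_symplForm, hS₂.det_mul_mul_transpose_add_smul_symplForm]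
  exact exists_perm_eq_comp_of_map_univ_val_eq <|
    map_univ_val_eq_of_prod_sq_add_sq_eq (fun i => (ha i).le) (fun i => (hb i).le) hchar

/-- Uniqueness of symplectic eigenvalues up to permutation. -/
theorem williamson_eigenvalues_unique (N : ℕ) (hN : 1 ≤ N)
    (A : Matrix (Fin (2 * N)) (Fin (2 * N)) ℝ) (hAsymm : A.IsSymm) (hApos : A.PosDef)
    (S₁ S₂ : Matrix (Fin (2 * N)) (Fin (2 * N)) ℝ) (a b : Fin N → ℝ)
    (hS₁ : IsSymplectic S₁) (hS₂ : IsSymplectic S₂)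
    (ha : ∀ i, 0 < a i) (hb : ∀ i, 0 < b i)
    (h₁ : S₁ * A * S₁ᵀ = WDiag a) (h₂ : S₂ * A * S₂ᵀ = WDiag b) :
    ∃ π : Equiv.Perm (Fin N), ∀ i, b i = a (π i) :=
  williamson_eigenvalues_unique_general N A S₁ S₂ a b hS₁ hS₂ ha hb h₁ h₂
end
end

section
/- The symplectic eigenvalues of a real symmetric positive definite 2N×2N matrix A are the positive eigenvalues of the matrix iσA: if S A Sᵀ = diag(a₁,a₁,…,a_N,a_N) is a Williamson form of A with S ∈ Sp(2N,ℝ) and a_i > 0, then the characteristic polynomial of the complex matrix i·σ·A (entries of σ and A viewed as complex numbers) equals ∏_{j=1}^N (X − a_j)(X + a_j); in particular the spectrum of iσA is {a_j, −a_j : j = 1,…,N}. -/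
/-!
Symplectic matrices are closed under transposition (because `σ² = -1`), so `Sᵀ σ S = σ`.
Writing `D = S A Sᵀ` and using `χ(XY) = χ(YX)`,
`χ(iσD) = χ(iσ S A Sᵀ) = χ(Sᵀ (iσ) S A) = χ(iσA)`.
Grouping the coordinates by modes, `iσD` is block diagonal with blocks
`[[0, i aⱼ], [-i aⱼ, 0]]`, whose characteristic polynomials are `X² - aⱼ²`.
-/

open Matrix Polynomial
open ComplexOrder

noncomputable section

namespace Matrix

variable {R n : Type*} [CommRing R] [Fintype n] [DecidableEq n]

theorem transpose_mul_mul_eq_of_mul_mul_transpose_eq {J S : Matrix n n R}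
    (hJ : J * J = -1) (hS : S * J * Sᵀ = J) : Sᵀ * J * S = J := by
  have hinv : -(J * Sᵀ * J) * S = 1 := by
    rw [mul_eq_one_comm]
    calc S * -(J * Sᵀ * J) = -(S * J * Sᵀ * J) := by noncomm_ring
      _ = 1 := by rw [hS, hJ, neg_neg]
  calc Sᵀ * J * S = -(J * J) * (Sᵀ * J * S) := by rw [hJ, neg_neg, one_mul]
    _ = J * (-(J * Sᵀ * J) * S) := by noncomm_ring
    _ = J := by rw [hinv, mul_one]

theorem charpoly_mul_congr_of_transpose_mul_mul_eq {K S : Matrix n n R}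
    (hS : Sᵀ * K * S = K) (A : Matrix n n R) :
    (K * (S * A * Sᵀ)).charpoly = (K * A).charpoly := by
  rw [← mul_assoc, charpoly_mul_comm, ← mul_assoc, ← mul_assoc, hS]

theorem charmatrix_blockDiagonal {o : Type*} [Fintype o] [DecidableEq o]
    (M : o → Matrix n n R) :
    charmatrix (blockDiagonal M) = blockDiagonal fun k => charmatrix (M k) := by
  ext ⟨i, k⟩ ⟨j, k'⟩
  by_cases hk : k = k' <;> by_cases hij : i = j <;> simp [blockDiagonal_apply, hk, hij]

theorem charpoly_blockDiagonal {o : Type*} [Fintype o] [DecidableEq o]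
    (M : o → Matrix n n R) :
    (blockDiagonal M).charpoly = ∏ k, (M k).charpoly := by
  rw [charpoly, charmatrix_blockDiagonal, det_blockDiagonal]
  rfl

theorem charpoly_fin_two_skew [Nontrivial R] (c : R) :
    (!![0, c; -c, 0] : Matrix (Fin 2) (Fin 2) R).charpoly = X ^ 2 + C (c ^ 2) := by
  simp [charpoly_fin_two, trace_fin_two, det_fin_two, sq]

end Matrix

theorem Matrix.map_ofReal_mul {l m n : Type*} [Fintype m] (X : Matrix l m ℝ)
    (Y : Matrix m n ℝ) :
    (X * Y).map Complex.ofReal = X.map Complex.ofReal * Y.map Complex.ofReal :=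
  Matrix.map_mul (f := Complex.ofRealHom)

def finTwoProdEquiv (N : ℕ) : Fin 2 × Fin N ≃ Fin (2 * N) where
  toFun p := ⟨2 * p.2 + p.1, by omega⟩
  invFun k := (⟨k % 2, by omega⟩, ⟨k / 2, by omega⟩)
  left_inv := by
    rintro ⟨⟨r, hr⟩, ⟨q, hq⟩⟩
    ext <;> simp <;> omega
  right_inv := by rintro ⟨k, hk⟩; ext; simp; omega

theorem finTwoProdEquiv_apply_val {N : ℕ} (p : Fin 2 × Fin N) :
    (finTwoProdEquiv N p : ℕ) = 2 * p.2 + p.1 := rfl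

theorem symplForm_eq_reindex_blockDiagonal (N : ℕ) :
    symplForm (2 * N) = reindex (finTwoProdEquiv N) (finTwoProdEquiv N)
      (blockDiagonal fun _ => !![0, 1; -1, 0]) := by
  ext i j
  obtain ⟨⟨r, q⟩, rfl⟩ := (finTwoProdEquiv N).surjective i
  obtain ⟨⟨r', q'⟩, rfl⟩ := (finTwoProdEquiv N).surjective j
  simp only [symplForm, of_apply, reindex_apply, submatrix_apply, Equiv.symm_apply_apply,
    blockDiagonal_apply, finTwoProdEquiv_apply_val]
  fin_cases r <;> fin_cases r' <;> simp [Fin.ext_iff, eq_comm]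
  split_ifs <;> first | rfl | omega

theorem WDiag_eq_reindex_blockDiagonal {N : ℕ} (a : Fin N → ℝ) :
    WDiag a = reindex (finTwoProdEquiv N) (finTwoProdEquiv N)
      (blockDiagonal fun q => a q • 1) := by
  ext i j
  obtain ⟨⟨r, q⟩, rfl⟩ := (finTwoProdEquiv N).surjective i
  obtain ⟨⟨r', q'⟩, rfl⟩ := (finTwoProdEquiv N).surjective j
  simp only [WDiag, diagonal_apply, reindex_apply, submatrix_apply, Equiv.symm_apply_apply,
    blockDiagonal_apply, finTwoProdEquiv_apply_val, EmbeddingLike.apply_eq_iff_eq]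
  fin_cases r <;> fin_cases r' <;> simp [Fin.ext_iff, Nat.mul_add_div]

theorem symplForm_mul_self (N : ℕ) : symplForm (2 * N) * symplForm (2 * N) = -1 := by
  have hJ : (!![0, 1; -1, 0] : Matrix (Fin 2) (Fin 2) ℝ) * !![0, 1; -1, 0] = -1 := by
    ext i j; fin_cases i <;> fin_cases j <;> simp
  rw [symplForm_eq_reindex_blockDiagonal, reindex_apply, submatrix_mul_equiv,
    ← blockDiagonal_mul, hJ, show (fun _ : Fin N => (-1 : Matrix (Fin 2) (Fin 2) ℝ)) = -1 from rfl, blockDiagonal_neg,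
    blockDiagonal_one]
  ext i j
  simp [one_apply]

theorem symplForm_mul_WDiag {N : ℕ} (a : Fin N → ℝ) :
    symplForm (2 * N) * WDiag a = reindex (finTwoProdEquiv N) (finTwoProdEquiv N)
      (blockDiagonal fun q => !![0, a q; -a q, 0]) := by
  simp_rw [symplForm_eq_reindex_blockDiagonal, WDiag_eq_reindex_blockDiagonal, reindex_apply,
    submatrix_mul_equiv, ← blockDiagonal_mul]
  congr! with q
  ext i j; fin_cases i <;> fin_cases j <;> simp

theorem I_smul_symplForm_mul_WDiag {N : ℕ} (a : Fin N → ℝ) :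
    Complex.I • (symplForm (2 * N) * WDiag a).map Complex.ofReal =
      reindex (finTwoProdEquiv N) (finTwoProdEquiv N)
        (blockDiagonal fun q => !![0, Complex.I * a q; -(Complex.I * a q), 0]) := by
  rw [symplForm_mul_WDiag]
  ext i j
  simp only [reindex_apply, submatrix_apply, Matrix.smul_apply, map_apply, blockDiagonal_apply]
  split_ifs
  · generalize ((finTwoProdEquiv N).symm i).1 = r
    generalize ((finTwoProdEquiv N).symm j).1 = r'
    fin_cases r <;> fin_cases r' <;> simp
  · simp

theorem charpoly_I_smul_symplForm_mul_WDiag {N : ℕ} (a : Fin N → ℝ) :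
    (Complex.I • (symplForm (2 * N) * WDiag a).map Complex.ofReal).charpoly =
      ∏ j, (X - C (a j : ℂ)) * (X + C (a j : ℂ)) := by
  rw [I_smul_symplForm_mul_WDiag, charpoly_reindex, charpoly_blockDiagonal]
  refine Finset.prod_congr rfl fun j _ => ?_
  rw [charpoly_fin_two_skew, mul_pow, Complex.I_sq, neg_one_mul, C_neg, C_pow]
  ring

theorem symplectic_eigenvalues_via_i_sigma_A_general (N : ℕ)
    (A : Matrix (Fin (2 * N)) (Fin (2 * N)) ℝ)
    (S : Matrix (Fin (2 * N)) (Fin (2 * N)) ℝ) (a : Fin N → ℝ)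
    (hS : IsSymplectic S) (hW : S * A * Sᵀ = WDiag a) :
    (Complex.I • ((symplForm (2 * N)).map Complex.ofReal * A.map Complex.ofReal)).charpoly =
        ∏ j : Fin N, ((X - C ((a j : ℝ) : ℂ)) * (X + C ((a j : ℝ) : ℂ))) ∧
      spectrum ℂ (Complex.I • ((symplForm (2 * N)).map Complex.ofReal * A.map Complex.ofReal)) =
        {z : ℂ | ∃ j : Fin N, z = ((a j : ℝ) : ℂ) ∨ z = -((a j : ℝ) : ℂ)} := by
  set M := Complex.I • ((symplForm (2 * N)).map Complex.ofReal * A.map Complex.ofReal) with hM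
  set K := Complex.I • (symplForm (2 * N)).map Complex.ofReal
  have hK : (S.map Complex.ofReal)ᵀ * K * S.map Complex.ofReal = K := by
    rw [mul_smul_comm, smul_mul_assoc, ← transpose_map, ← map_ofReal_mul, ← map_ofReal_mul,
      transpose_mul_mul_eq_of_mul_mul_transpose_eq (symplForm_mul_self N) hS]
  have hchar : M.charpoly = ∏ j, (X - C (a j : ℂ)) * (X + C (a j : ℂ)) := by
    rw [hM, ← smul_mul_assoc, ← charpoly_mul_congr_of_transpose_mul_mul_eq hK, ← transpose_map,
      ← map_ofReal_mul, ← map_ofReal_mul, hW, smul_mul_assoc, ← map_ofReal_mul,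
      charpoly_I_smul_symplForm_mul_WDiag]
  refine ⟨hchar, Set.ext fun z => ?_⟩
  rw [mem_spectrum_iff_isRoot_charpoly, hchar, isRoot_prod]
  simp [sub_eq_zero, add_eq_zero_iff_eq_neg]

/-- The symplectic eigenvalues of `A` are the positive eigenvalues of `iσA`. -/
theorem symplectic_eigenvalues_via_i_sigma_A (N : ℕ) (hN : 1 ≤ N)
    (A : Matrix (Fin (2 * N)) (Fin (2 * N)) ℝ) (hAsymm : A.IsSymm) (hApos : A.PosDef)
    (S : Matrix (Fin (2 * N)) (Fin (2 * N)) ℝ) (a : Fin N → ℝ)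
    (hS : IsSymplectic S) (ha : ∀ i, 0 < a i) (hW : S * A * Sᵀ = WDiag a) :
    (Complex.I • ((symplForm (2 * N)).map Complex.ofReal * A.map Complex.ofReal)).charpoly =
        ∏ j : Fin N, ((X - C ((a j : ℝ) : ℂ)) * (X + C ((a j : ℝ) : ℂ))) ∧
      spectrum ℂ (Complex.I • ((symplForm (2 * N)).map Complex.ofReal * A.map Complex.ofReal)) =
        {z : ℂ | ∃ j : Fin N, z = ((a j : ℝ) : ℂ) ∨ z = -((a j : ℝ) : ℂ)} :=
  symplectic_eigenvalues_via_i_sigma_A_general N A S a hS hW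
end
end

section
/- Squeezing criterion: let Γ be a 2N×2N covariance matrix. Then there exist a matrix S with S σ Sᵀ = σ and S Sᵀ = 𝟙 (a passive symplectic transformation) and an index k with (S Γ Sᵀ)_{kk} < 1 if and only if the smallest eigenvalue of Γ is smaller than one. -/
/-!
If every eigenvalue of `Γ` is at least one, then `1 ≤ Γ` in the Loewner order, conjugation by an
orthogonal `S` preserves this, and so every diagonal entry of `S Γ Sᵀ` is at least one.

Conversely, identify `ℝ^{2N}` with `ℂ^N`, the `j`-th mode `(x_j, p_j)` becoming `x_j + i p_j`.
The realification of a unitary `U ∈ U(N)` is orthogonal, and it is symplectic because `σ` is the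
realification of the scalar `-i`, which commutes with `U`. A unit eigenvector `v` for an eigenvalue
`λ < 1` is, read in `ℂ^N`, a column of some unitary, hence a row of the realification of its
adjoint; for that passive symplectic `S` the corresponding diagonal entry of `S Γ Sᵀ` is `vᵀ Γ v = λ`.
-/

open Matrix Polynomial
open ComplexOrder

noncomputable section

def modeEquiv (N : ℕ) : Fin N × Fin 2 ≃ Fin (2 * N) :=
  finProdFinEquiv.trans (finCongr (Nat.mul_comm N 2))

@[simp]
theorem modeEquiv_apply_val {N : ℕ} (j : Fin N) (a : Fin 2) :
    (modeEquiv N (j, a) : ℕ) = 2 * j + a := by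
  simp [modeEquiv]; ring

namespace Matrix

open scoped MatrixOrder in
theorem IsHermitian.one_le_diag_conj_of_one_le_eigenvalues {n 𝕜 : Type*} [Fintype n]
    [DecidableEq n] [RCLike 𝕜] {A : Matrix n n 𝕜} (hA : A.IsHermitian)
    (h : ∀ i, 1 ≤ hA.eigenvalues i) {S : Matrix n n 𝕜} (hS : S * Sᴴ = 1) (k : n) :
    1 ≤ (S * A * Sᴴ) k k := by
  have hA₁ : algebraMap ℝ (Matrix n n 𝕜) 1 ≤ A := by
    rw [algebraMap_le_iff_le_spectrum hA, hA.spectrum_real_eq_range_eigenvalues]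
    exact Set.forall_mem_range.mpr h
  have hconj := star_right_conjugate_le_conjugate hA₁ S
  rw [map_one, mul_one, star_eq_conjTranspose, hS] at hconj
  simpa [sub_nonneg] using (le_iff.mp hconj).diag_nonneg (i := k)

theorem exists_mem_unitaryGroup_col_eq {n 𝕜 : Type*} [Fintype n] [DecidableEq n] [RCLike 𝕜]
    (u : EuclideanSpace 𝕜 n) (hu : ‖u‖ = 1) (j₀ : n) :
    ∃ U ∈ unitaryGroup n 𝕜, ∀ i, U i j₀ = u i := by
  have hsingle : Orthonormal 𝕜 (({j₀} : Set n).domRestrict fun _ ↦ u) := by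
    rw [orthonormal_subsingleton_iff]
    exact fun _ ↦ hu
  obtain ⟨b, hb⟩ := hsingle.exists_orthonormalBasis_extension_of_card_eq (by simp)
  refine ⟨_, (EuclideanSpace.basisFun n 𝕜).toMatrix_orthonormalBasis_mem_unitary b, fun i ↦ ?_⟩
  rw [Module.Basis.toMatrix_apply, hb j₀ rfl]
  rfl

end Matrix

section Realify

variable {N : ℕ}

variable (N) in
def realify : Matrix (Fin N) (Fin N) ℂ →ₐ[ℝ] Matrix (Fin (2 * N)) (Fin (2 * N)) ℝ :=
  ((reindexAlgEquiv ℝ ℝ (modeEquiv N)).toAlgHom.comp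
    (compAlgEquiv (Fin N) (Fin 2) ℝ ℝ).toAlgHom).comp
    (Algebra.leftMulMatrix Complex.basisOneI).mapMatrix

theorem realify_apply (U : Matrix (Fin N) (Fin N) ℂ) (i j : Fin N) (a b : Fin 2) :
    realify N U (modeEquiv N (i, a)) (modeEquiv N (j, b)) =
      !![(U i j).re, -(U i j).im; (U i j).im, (U i j).re] a b := by
  simp [realify, Algebra.leftMulMatrix_complex]

theorem realify_conjTranspose (U : Matrix (Fin N) (Fin N) ℂ) :
    realify N Uᴴ = (realify N U)ᵀ := by
  ext p q
  obtain ⟨⟨i, a⟩, rfl⟩ := (modeEquiv N).surjective p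
  obtain ⟨⟨j, b⟩, rfl⟩ := (modeEquiv N).surjective q
  rw [transpose_apply, realify_apply, realify_apply]
  fin_cases a <;> fin_cases b <;> simp

theorem symplForm_eq_realify_scalar :
    symplForm (2 * N) = realify N (scalar (Fin N) (-Complex.I)) := by
  ext p q
  obtain ⟨⟨i, a⟩, rfl⟩ := (modeEquiv N).surjective p
  obtain ⟨⟨j, b⟩, rfl⟩ := (modeEquiv N).surjective q
  rw [realify_apply, symplForm, of_apply]
  simp only [modeEquiv_apply_val, scalar_apply, diagonal_apply]
  by_cases hij : i = j
  · subst hij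
    fin_cases a <;> fin_cases b <;> simp
  · have hij' : (i : ℕ) ≠ j := Fin.val_ne_of_ne hij
    have ha := a.isLt
    have hb := b.isLt
    rw [if_neg (by omega), if_neg (by omega), if_neg hij]
    fin_cases a <;> fin_cases b <;> simp

theorem realify_mul_transpose_of_mem_unitaryGroup {U : Matrix (Fin N) (Fin N) ℂ}
    (hU : U ∈ unitaryGroup (Fin N) ℂ) : realify N U * (realify N U)ᵀ = 1 := by
  rw [← realify_conjTranspose, ← map_mul, ← star_eq_conjTranspose, mem_unitaryGroup_iff.mp hU,
    map_one]

theorem isSymplectic_realify_of_mem_unitaryGroup {U : Matrix (Fin N) (Fin N) ℂ}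
    (hU : U ∈ unitaryGroup (Fin N) ℂ) : IsSymplectic (realify N U) := by
  rw [IsSymplectic, symplForm_eq_realify_scalar, ← realify_conjTranspose, ← map_mul, ← map_mul,
    ← (scalar_commute _ (fun _ ↦ Commute.all _ _) U).eq, mul_assoc, ← star_eq_conjTranspose,
    mem_unitaryGroup_iff.mp hU, mul_one]

def complexify (v : EuclideanSpace ℝ (Fin (2 * N))) : EuclideanSpace ℂ (Fin N) :=
  WithLp.toLp 2 fun j ↦ ⟨v (modeEquiv N (j, 0)), v (modeEquiv N (j, 1))⟩

theorem norm_complexify (v : EuclideanSpace ℝ (Fin (2 * N))) : ‖complexify v‖ = ‖v‖ := by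
  rw [← sq_eq_sq₀ (norm_nonneg _) (norm_nonneg _), EuclideanSpace.norm_sq_eq,
    EuclideanSpace.norm_sq_eq, ← (modeEquiv N).sum_comp, Fintype.sum_prod_type]
  refine Finset.sum_congr rfl fun j _ ↦ ?_
  simp only [complexify, PiLp.toLp_apply, Complex.sq_norm, Complex.normSq_mk, Real.norm_eq_abs,
    sq_abs, Fin.sum_univ_two]
  ring

theorem exists_isSymplectic_row_eq (v : EuclideanSpace ℝ (Fin (2 * N))) (hv : ‖v‖ = 1) :
    ∃ S : Matrix (Fin (2 * N)) (Fin (2 * N)) ℝ,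
      IsSymplectic S ∧ S * Sᵀ = 1 ∧ ∃ k, ∀ q, S k q = v q := by
  obtain ⟨j₀⟩ : Nonempty (Fin N) := by
    rw [← not_isEmpty_iff]
    intro
    have : IsEmpty (Fin (2 * N)) := (modeEquiv N).symm.isEmpty
    simp [Subsingleton.elim v 0] at hv
  obtain ⟨W, hW, hWcol⟩ :=
    exists_mem_unitaryGroup_col_eq (complexify v) ((norm_complexify v).trans hv) j₀
  refine ⟨realify N (star W), isSymplectic_realify_of_mem_unitaryGroup (Unitary.star_mem hW),
    realify_mul_transpose_of_mem_unitaryGroup (Unitary.star_mem hW), modeEquiv N (j₀, 0),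
    fun q ↦ ?_⟩
  obtain ⟨⟨j, b⟩, rfl⟩ := (modeEquiv N).surjective q
  rw [realify_apply, star_apply, hWcol]
  fin_cases b <;> simp [complexify]

end Realify

theorem squeezing_criterion_general (N : ℕ)
    (Γ : Matrix (Fin (2 * N)) (Fin (2 * N)) ℝ)
    (hΓherm : Γ.IsHermitian) :
    (∃ S : Matrix (Fin (2 * N)) (Fin (2 * N)) ℝ,
        IsSymplectic S ∧ S * Sᵀ = 1 ∧ ∃ k, (S * Γ * Sᵀ) k k < 1) ↔
      ∃ k, hΓherm.eigenvalues k < 1 := by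
  constructor
  · rintro ⟨S, -, hS, k, hk⟩
    by_contra! hge
    have hdiag := hΓherm.one_le_diag_conj_of_one_le_eigenvalues hge (S := S) (by simpa using hS) k
    exact hk.not_ge (by simpa using hdiag)
  · rintro ⟨k, hk⟩
    obtain ⟨S, hSympl, hS, k', hrow⟩ := exists_isSymplectic_row_eq (hΓherm.eigenvectorBasis k)
      (hΓherm.eigenvectorBasis.orthonormal.1 k)
    refine ⟨S, hSympl, hS, k', ?_⟩
    rw [mul_mul_apply, transpose_transpose, funext hrow]
    simpa [hΓherm.eigenvalues_eq] using hk

/-- Squeezing criterion: some passive symplectic transformation produces a diagonal entry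
smaller than one iff the smallest eigenvalue of `Γ` is smaller than one. -/
theorem squeezing_criterion (N : ℕ) (hN : 1 ≤ N)
    (Γ : Matrix (Fin (2 * N)) (Fin (2 * N)) ℝ) (hΓcov : IsCovMatrix Γ)
    (hΓherm : Γ.IsHermitian) :
    (∃ S : Matrix (Fin (2 * N)) (Fin (2 * N)) ℝ,
        IsSymplectic S ∧ S * Sᵀ = 1 ∧ ∃ k, (S * Γ * Sᵀ) k k < 1) ↔
      ∃ k, hΓherm.eigenvalues k < 1 :=
  squeezing_criterion_general N Γ hΓherm
end
end

section
/- Mixtures of product covariance data yield separable covariance matrices: let I be a finite index set, p : I → ℝ with p_i ≥ 0 and Σ_i p_i = 1, let N = N_A + N_B, and for each i ∈ I let γ^i_A be a 2N_A×2N_A covariance matrix, γ^i_B a 2N_B×2N_B covariance matrix, and d^i ∈ ℝ^{2N} a vector. Set d := Σ_i p_i d^i and γ := Σ_i p_i (γ^i_A ⊕ γ^i_B) + 2 Σ_i p_i d^i (d^i)ᵀ − 2 d dᵀ. Then γ − ((Σ_i p_i γ^i_A) ⊕ (Σ_i p_i γ^i_B)) is positive semidefinite; in particular γ is a separable covariance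 matrix with respect to the split A|B. -/
open Matrix Polynomial
open ComplexOrder

noncomputable section

/-!
The excess `γ - (γ̄_A ⊕ γ̄_B)` is twice the weighted covariance `∑ pᵢ (dᵢ - d)(dᵢ - d)ᵀ` of the
vectors `dᵢ`, hence positive semidefinite. The averages `γ̄_A`, `γ̄_B` are covariance matrices
because the condition `γ + iσ ≥ 0` is convex; their direct sum is one because `σ` splits as
`σ_A ⊕ σ_B` along a cut after an even index; and adding a positive semidefinite matrix to a
covariance matrix keeps `γ + iσ ≥ 0`.
-/

lemma Finset.sum_mul_sub_sum_mul_sum {R ι : Type*} [CommRing R] (s : Finset ι) {p : ι → R}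
    (hp : ∑ i ∈ s, p i = 1) (x y : ι → R) :
    ∑ i ∈ s, p i * x i * y i - (∑ i ∈ s, p i * x i) * ∑ i ∈ s, p i * y i =
      ∑ i ∈ s, p i * (x i - ∑ j ∈ s, p j * x j) * (y i - ∑ j ∈ s, p j * y j) := by
  set X := ∑ j ∈ s, p j * x j
  set Y := ∑ j ∈ s, p j * y j
  have hexpand : ∀ i, p i * (x i - X) * (y i - Y) =
      p i * x i * y i - p i * x i * Y - X * (p i * y i) + X * Y * p i := fun i => by ring
  simp only [hexpand, Finset.sum_add_distrib, Finset.sum_sub_distrib, ← Finset.sum_mul,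
    ← Finset.mul_sum, hp]
  ring

namespace Matrix

variable {m n : Type*} [Fintype m] [Fintype n]

open scoped MatrixOrder in
lemma PosSemidef.exists_eq_conjTranspose_mul_self {𝕜 : Type*} [RCLike 𝕜] {P : Matrix n n 𝕜}
    (hP : P.PosSemidef) : ∃ B : Matrix n n 𝕜, P = Bᴴ * B := by
  classical
  exact CStarAlgebra.nonneg_iff_eq_star_mul_self.mp hP.nonneg

lemma PosSemidef.map_ofReal {P : Matrix n n ℝ} (hP : P.PosSemidef) :
    (P.map ((↑) : ℝ → ℂ)).PosSemidef := by
  obtain ⟨B, rfl⟩ := hP.exists_eq_conjTranspose_mul_self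
  have hmap : (Bᴴ * B).map Complex.ofRealHom =
      (B.map Complex.ofRealHom)ᴴ * B.map Complex.ofRealHom := by
    rw [Matrix.map_mul, conjTranspose_map _ fun x => by simp]
  simpa using hmap ▸ posSemidef_conjTranspose_mul_self (B.map Complex.ofRealHom)

lemma PosSemidef.fromBlocks_zero {𝕜 : Type*} [RCLike 𝕜] {A : Matrix m m 𝕜} {B : Matrix n n 𝕜}
    (hA : A.PosSemidef) (hB : B.PosSemidef) : (fromBlocks A 0 0 B).PosSemidef := by
  obtain ⟨A', rfl⟩ := hA.exists_eq_conjTranspose_mul_self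
  obtain ⟨B', rfl⟩ := hB.exists_eq_conjTranspose_mul_self
  simpa [fromBlocks_conjTranspose, fromBlocks_multiply] using
    posSemidef_conjTranspose_mul_self (fromBlocks A' 0 0 B')

lemma posSemidef_sum_smul_vecMulVec_sub {ι : Type*} [Fintype ι] (p : ι → ℝ) (hp : ∀ i, 0 ≤ p i)
    (hsum : ∑ i, p i = 1) (d : ι → n → ℝ) :
    ((∑ i, p i • vecMulVec (d i) (d i)) -
      vecMulVec (∑ i, p i • d i) (∑ i, p i • d i)).PosSemidef := by
  set μ := ∑ i, p i • d i
  have hvar : (∑ i, p i • vecMulVec (d i) (d i)) - vecMulVec μ μ =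
      ∑ i, p i • vecMulVec (d i - μ) (d i - μ) := by
    ext a b
    simpa [μ, vecMulVec_apply, sum_apply, mul_assoc] using
      Finset.univ.sum_mul_sub_sum_mul_sum hsum (d · a) (d · b)
  rw [hvar]
  exact posSemidef_sum _ fun i _ => (posSemidef_vecMulVec_self_star (d i - μ)).smul (hp i)

end Matrix

lemma symplForm_add {m : ℕ} (hm : Even m) (n : ℕ) :
    symplForm (m + n) = dirSum (symplForm m) (symplForm n) := by
  obtain ⟨k, rfl⟩ := hm
  ext i j
  refine Fin.addCases (fun a => ?_) (fun a => ?_) i <;>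
    refine Fin.addCases (fun b => ?_) (fun b => ?_) j <;>
    have := a.isLt <;> have := b.isLt <;>
    simp only [dirSum, reindex_apply, submatrix_apply, finSumFinEquiv_symm_apply_castAdd,
      finSumFinEquiv_symm_apply_natAdd, fromBlocks_apply₁₁, fromBlocks_apply₁₂,
      fromBlocks_apply₂₁, fromBlocks_apply₂₂, symplForm, of_apply, Fin.val_castAdd,
      Fin.val_natAdd, Matrix.zero_apply] <;>
    split_ifs <;> first | rfl | omega

lemma dirSum_sum_smul {m n : ℕ} {ι : Type*} [Fintype ι] (p : ι → ℝ)
    (A : ι → Matrix (Fin m) (Fin m) ℝ) (B : ι → Matrix (Fin n) (Fin n) ℝ) :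
    dirSum (∑ i, p i • A i) (∑ i, p i • B i) = ∑ i, p i • dirSum (A i) (B i) := by
  ext k l
  refine Fin.addCases (fun a => ?_) (fun a => ?_) k <;>
    refine Fin.addCases (fun b => ?_) (fun b => ?_) l <;>
    simp [dirSum, Matrix.sum_apply]

def uncertaintyMatrix {n : ℕ} (γ : Matrix (Fin n) (Fin n) ℝ) : Matrix (Fin n) (Fin n) ℂ :=
  γ.map Complex.ofReal + Complex.I • (symplForm n).map Complex.ofReal

section Covariance

variable {n : ℕ}

lemma isCovMatrix_iff {γ : Matrix (Fin n) (Fin n) ℝ} :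
    IsCovMatrix γ ↔ γ.IsSymm ∧ (uncertaintyMatrix γ).PosSemidef :=
  Iff.rfl

lemma uncertaintyMatrix_add (γ P : Matrix (Fin n) (Fin n) ℝ) :
    uncertaintyMatrix (γ + P) = uncertaintyMatrix γ + P.map Complex.ofReal := by
  rw [uncertaintyMatrix, uncertaintyMatrix, Matrix.map_add _ Complex.ofReal_add]
  abel

lemma IsCovMatrix.add_posSemidef {γ P : Matrix (Fin n) (Fin n) ℝ} (hγ : IsCovMatrix γ)
    (hP : P.PosSemidef) : IsCovMatrix (γ + P) :=
  isCovMatrix_iff.2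
    ⟨hγ.1.add hP.isHermitian, uncertaintyMatrix_add γ P ▸ hγ.2.add hP.map_ofReal⟩

lemma uncertaintyMatrix_smul_add_smul (γ γ' : Matrix (Fin n) (Fin n) ℝ) {a b : ℝ}
    (hab : a + b = 1) :
    uncertaintyMatrix (a • γ + b • γ') =
      (a : ℂ) • uncertaintyMatrix γ + (b : ℂ) • uncertaintyMatrix γ' := by
  have hab' : (a : ℂ) + b = 1 := mod_cast hab
  ext i j
  simp only [uncertaintyMatrix, Matrix.add_apply, Matrix.smul_apply, map_apply, smul_eq_mul,
    Complex.ofReal_add, Complex.ofReal_mul]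
  linear_combination -(Complex.I * symplForm n i j) * hab'

lemma convex_setOf_isCovMatrix : Convex ℝ {γ : Matrix (Fin n) (Fin n) ℝ | IsCovMatrix γ} := by
  intro γ hγ γ' hγ' a b ha hb hab
  refine isCovMatrix_iff.2 ⟨(hγ.1.smul a).add (hγ'.1.smul b), ?_⟩
  rw [uncertaintyMatrix_smul_add_smul γ γ' hab]
  exact (hγ.2.smul (Complex.zero_le_real.mpr ha)).add (hγ'.2.smul (Complex.zero_le_real.mpr hb))

lemma uncertaintyMatrix_dirSum {m : ℕ} (hm : Even m) (A : Matrix (Fin m) (Fin m) ℝ)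
    (B : Matrix (Fin n) (Fin n) ℝ) :
    uncertaintyMatrix (dirSum A B) = reindex finSumFinEquiv finSumFinEquiv
      (fromBlocks (uncertaintyMatrix A) 0 0 (uncertaintyMatrix B)) := by
  rw [uncertaintyMatrix, symplForm_add hm]
  ext i j
  refine Fin.addCases (fun a => ?_) (fun a => ?_) i <;>
    refine Fin.addCases (fun b => ?_) (fun b => ?_) j <;>
    simp [dirSum, uncertaintyMatrix]

lemma IsCovMatrix.dirSum {m : ℕ} (hm : Even m) {A : Matrix (Fin m) (Fin m) ℝ}
    {B : Matrix (Fin n) (Fin n) ℝ} (hA : IsCovMatrix A) (hB : IsCovMatrix B) :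
    IsCovMatrix (dirSum A B) := by
  refine isCovMatrix_iff.2 ⟨(hA.1.fromBlocks (by simp) hB.1).submatrix _, ?_⟩
  rw [uncertaintyMatrix_dirSum hm, reindex_apply]
  exact (hA.2.fromBlocks_zero hB.2).submatrix _

end Covariance

theorem mixture_of_products_is_separable_general (NA NB : ℕ)
    {I : Type} [Fintype I] (p : I → ℝ) (hp : ∀ i, 0 ≤ p i) (hsum : ∑ i, p i = 1)
    (γA : I → Matrix (Fin (2 * NA)) (Fin (2 * NA)) ℝ)
    (γB : I → Matrix (Fin (2 * NB)) (Fin (2 * NB)) ℝ)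
    (hγA : ∀ i, IsCovMatrix (γA i)) (hγB : ∀ i, IsCovMatrix (γB i))
    (d : I → (Fin (2 * NA + 2 * NB) → ℝ))
    (γ : Matrix (Fin (2 * NA + 2 * NB)) (Fin (2 * NA + 2 * NB)) ℝ)
    (hγ : γ = (∑ i, p i • dirSum (γA i) (γB i)) +
        (2 : ℝ) • (∑ i, p i • Matrix.vecMulVec (d i) (d i)) -
        (2 : ℝ) • Matrix.vecMulVec (∑ i, p i • d i) (∑ i, p i • d i)) :
    (γ - dirSum (∑ i, p i • γA i) (∑ i, p i • γB i)).PosSemidef ∧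
      IsCovMatrix γ ∧ IsSepCov (2 * NA) (2 * NB) γ := by
  set Δ := (∑ i, p i • vecMulVec (d i) (d i)) - vecMulVec (∑ i, p i • d i) (∑ i, p i • d i)
  have hΔ : ((2 : ℝ) • Δ).PosSemidef :=
    (posSemidef_sum_smul_vecMulVec_sub p hp hsum d).smul zero_le_two
  have hγ' : γ = dirSum (∑ i, p i • γA i) (∑ i, p i • γB i) + (2 : ℝ) • Δ := by
    rw [hγ, dirSum_sum_smul, smul_sub, add_sub_assoc]
  have hcovA := convex_setOf_isCovMatrix.sum_mem (fun i _ => hp i) hsum fun i _ => hγA i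
  have hcovB := convex_setOf_isCovMatrix.sum_mem (fun i _ => hp i) hsum fun i _ => hγB i
  have hsep : (γ - dirSum (∑ i, p i • γA i) (∑ i, p i • γB i)).PosSemidef := by
    rwa [hγ', add_sub_cancel_left]
  exact ⟨hsep, hγ' ▸ (hcovA.dirSum (even_two_mul NA) hcovB).add_posSemidef hΔ,
    _, _, hcovA, hcovB, hsep⟩

/-- Mixtures of product covariance data yield separable covariance matrices. -/
theorem mixture_of_products_is_separable (NA NB : ℕ) (hNA : 1 ≤ NA) (hNB : 1 ≤ NB)
    {I : Type} [Fintype I] (p : I → ℝ) (hp : ∀ i, 0 ≤ p i) (hsum : ∑ i, p i = 1)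
    (γA : I → Matrix (Fin (2 * NA)) (Fin (2 * NA)) ℝ)
    (γB : I → Matrix (Fin (2 * NB)) (Fin (2 * NB)) ℝ)
    (hγA : ∀ i, IsCovMatrix (γA i)) (hγB : ∀ i, IsCovMatrix (γB i))
    (d : I → (Fin (2 * NA + 2 * NB) → ℝ))
    (γ : Matrix (Fin (2 * NA + 2 * NB)) (Fin (2 * NA + 2 * NB)) ℝ)
    (hγ : γ = (∑ i, p i • dirSum (γA i) (γB i)) +
        (2 : ℝ) • (∑ i, p i • Matrix.vecMulVec (d i) (d i)) -
        (2 : ℝ) • Matrix.vecMulVec (∑ i, p i • d i) (∑ i, p i • d i)) :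
    (γ - dirSum (∑ i, p i • γA i) (∑ i, p i • γB i)).PosSemidef ∧
      IsCovMatrix γ ∧ IsSepCov (2 * NA) (2 * NB) γ :=
  mixture_of_products_is_separable_general NA NB p hp hsum γA γB hγA hγB d γ hγ
end
end

section
/- Characterization of bipartite entanglement witnesses by the symplectic traces of the reduced blocks: let N = N_A + N_B and let Z be a real symmetric positive definite 2N×2N matrix; let Z_A be its leading principal 2N_A×2N_A submatrix and Z_B its trailing principal 2N_B×2N_B submatrix (both positive definite), with Williamson forms having symplectic eigenvalues z^A_1,…,z^A_{N_A} and z^B_1,…,z^B_{N_B} respectively. Then tr(Z·γ) ≥ 1 holds for every covariance matrix γ that is separable with respect to the split A|B if and only if Σ_i z^A_i + Σ_j z^B_j ≥ 1/2. -/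
open Matrix Polynomial
open ComplexOrder

noncomputable section

/-! ### Auxiliary lemmas -/


lemma symplForm_eq_one {n : ℕ} {i j : Fin n} (h1 : (i : ℕ) + 1 = (j : ℕ))
    (h2 : (i : ℕ) % 2 = 0) : symplForm n i j = 1 := by
  simp only [symplForm, Matrix.of_apply]
  rw [if_pos ⟨h1, h2⟩]

lemma symplForm_eq_negone {n : ℕ} {i j : Fin n} (h1 : (j : ℕ) + 1 = (i : ℕ))
    (h2 : (j : ℕ) % 2 = 0) : symplForm n i j = -1 := by
  simp only [symplForm, Matrix.of_apply]
  rw [if_neg (by omega), if_pos ⟨h1, h2⟩]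

lemma symplForm_eq_zero {n : ℕ} {i j : Fin n}
    (h1 : ¬((i : ℕ) + 1 = (j : ℕ) ∧ (i : ℕ) % 2 = 0))
    (h2 : ¬((j : ℕ) + 1 = (i : ℕ) ∧ (j : ℕ) % 2 = 0)) : symplForm n i j = 0 := by
  simp only [symplForm, Matrix.of_apply]
  rw [if_neg h1, if_neg h2]

lemma symplForm_transpose (n : ℕ) : (symplForm n)ᵀ = -symplForm n := by
  ext i j
  rw [Matrix.transpose_apply, Matrix.neg_apply]
  by_cases c1 : (i : ℕ) + 1 = (j : ℕ) ∧ (i : ℕ) % 2 = 0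
  · rw [symplForm_eq_negone c1.1 c1.2, symplForm_eq_one c1.1 c1.2]
  · by_cases c2 : (j : ℕ) + 1 = (i : ℕ) ∧ (j : ℕ) % 2 = 0
    · rw [symplForm_eq_one c2.1 c2.2, symplForm_eq_negone c2.1 c2.2]
      norm_num
    · rw [symplForm_eq_zero c2 c1, symplForm_eq_zero c1 c2]
      norm_num

lemma symplForm_sq {n : ℕ} (hn : n % 2 = 0) : symplForm n * symplForm n = -1 := by
  ext i j
  rw [Matrix.mul_apply]
  have hneg : (-1 : Matrix (Fin n) (Fin n) ℝ) i j = if i = j then -1 else 0 := by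
    rw [Matrix.neg_apply, Matrix.one_apply]
    split_ifs <;> norm_num
  rw [hneg]
  by_cases h : (i : ℕ) % 2 = 0
  · have hi1 : (i : ℕ) + 1 < n := by have := i.isLt; omega
    rw [Finset.sum_eq_single (⟨(i : ℕ) + 1, hi1⟩ : Fin n)]
    · rw [symplForm_eq_one (j := ⟨(i : ℕ) + 1, hi1⟩) rfl h, one_mul]
      by_cases hij : i = j
      · subst hij
        rw [symplForm_eq_negone (j := i) rfl h, if_pos rfl]
      · have hvj : ¬ ((i : ℕ) = (j : ℕ)) := fun hv => hij (Fin.ext hv)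
        rw [symplForm_eq_zero (by simp only [Fin.val_mk]; omega) (by simp only [Fin.val_mk]; omega),
          if_neg hij]
    · intro b _ hb
      have hb' : ¬ ((i : ℕ) + 1 = (b : ℕ)) := fun hc => hb (Fin.ext hc.symm)
      rw [symplForm_eq_zero (by omega) (by omega), zero_mul]
    · intro hne
      exact absurd (Finset.mem_univ _) hne
  · have h0 : 0 < (i : ℕ) := by omega
    have hi1 : (i : ℕ) - 1 < n := by have := i.isLt; omega
    rw [Finset.sum_eq_single (⟨(i : ℕ) - 1, hi1⟩ : Fin n)]
    · rw [symplForm_eq_negone (j := ⟨(i : ℕ) - 1, hi1⟩) (by simp only [Fin.val_mk]; omega)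
        (by simp only [Fin.val_mk]; omega)]
      by_cases hij : i = j
      · subst hij
        rw [symplForm_eq_one (i := (⟨(i : ℕ) - 1, hi1⟩ : Fin n)) (by simp only [Fin.val_mk]; omega)
          (by simp only [Fin.val_mk]; omega), if_pos rfl]
        norm_num
      · have hvj : ¬ ((i : ℕ) = (j : ℕ)) := fun hv => hij (Fin.ext hv)
        rw [symplForm_eq_zero (by simp only [Fin.val_mk]; omega) (by simp only [Fin.val_mk]; omega),
          if_neg hij]
        norm_num
    · intro b _ hb
      have hb' : ¬ ((b : ℕ) = (i : ℕ) - 1) := fun hc => hb (Fin.ext hc)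
      rw [symplForm_eq_zero (by omega) (by omega), zero_mul]
    · intro hne
      exact absurd (Finset.mem_univ _) hne

def sInv {n : ℕ} (S : Matrix (Fin n) (Fin n) ℝ) : Matrix (Fin n) (Fin n) ℝ :=
  -(symplForm n * Sᵀ * symplForm n)

lemma sympl_mul_sInv {n : ℕ} {S : Matrix (Fin n) (Fin n) ℝ} (hn : n % 2 = 0)
    (hS : IsSymplectic S) : S * sInv S = 1 := by
  unfold sInv
  rw [Matrix.mul_neg, ← Matrix.mul_assoc, ← Matrix.mul_assoc, hS, symplForm_sq hn, neg_neg]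

lemma sympl_sInv_mul {n : ℕ} {S : Matrix (Fin n) (Fin n) ℝ} (hn : n % 2 = 0)
    (hS : IsSymplectic S) : sInv S * S = 1 :=
  mul_eq_one_comm.mp (sympl_mul_sInv hn hS)

lemma sympl_sigma_mul_sInv {n : ℕ} {S : Matrix (Fin n) (Fin n) ℝ} (hn : n % 2 = 0) :
    symplForm n * sInv S = Sᵀ * symplForm n := by
  unfold sInv
  rw [Matrix.mul_neg, ← Matrix.mul_assoc, ← Matrix.mul_assoc, symplForm_sq hn, neg_one_mul,
    Matrix.neg_mul, neg_neg]

lemma sympl_transpose {n : ℕ} {S : Matrix (Fin n) (Fin n) ℝ} (hn : n % 2 = 0)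
    (hS : IsSymplectic S) : IsSymplectic Sᵀ := by
  unfold IsSymplectic
  rw [Matrix.transpose_transpose, ← sympl_sigma_mul_sInv (S := S) hn, Matrix.mul_assoc,
    sympl_sInv_mul hn hS, Matrix.mul_one]

lemma sympl_sInv {n : ℕ} {S : Matrix (Fin n) (Fin n) ℝ} (hn : n % 2 = 0)
    (hS : IsSymplectic S) : IsSymplectic (sInv S) := by
  unfold IsSymplectic
  conv_lhs => rw [← hS]
  have h2 : sInv S * (S * symplForm n * Sᵀ) * (sInv S)ᵀ
      = (sInv S * S) * symplForm n * (sInv S * S)ᵀ := by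
    rw [Matrix.transpose_mul]
    simp only [Matrix.mul_assoc]
  rw [h2, sympl_sInv_mul hn hS]
  simp






lemma map_mul' {n : ℕ} (A B : Matrix (Fin n) (Fin n) ℝ) :
    (A * B).map Complex.ofReal = A.map Complex.ofReal * B.map Complex.ofReal := by
  ext i j
  simp only [Matrix.mul_apply, Matrix.map_apply]
  norm_cast

lemma conjTranspose_map_real {n : ℕ} (S : Matrix (Fin n) (Fin n) ℝ) :
    (S.map Complex.ofReal)ᴴ = Sᵀ.map Complex.ofReal := by
  ext i j
  simp [Matrix.conjTranspose_apply, Matrix.map_apply, Complex.conj_ofReal]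

lemma covMatrix_congruence {n : ℕ} {S γ : Matrix (Fin n) (Fin n) ℝ}
    (hS : IsSymplectic S) (hγ : IsCovMatrix γ) : IsCovMatrix (S * γ * Sᵀ) := by
  obtain ⟨hsym, hpsd⟩ := hγ
  constructor
  · unfold Matrix.IsSymm at *
    rw [Matrix.transpose_mul, Matrix.transpose_mul, Matrix.transpose_transpose, hsym,
      Matrix.mul_assoc]
  · have key : (S * γ * Sᵀ).map Complex.ofReal
        + Complex.I • (symplForm n).map Complex.ofReal
        = S.map Complex.ofReal
          * ((γ.map Complex.ofReal) + Complex.I • (symplForm n).map Complex.ofReal)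
          * (S.map Complex.ofReal)ᴴ := by
      rw [conjTranspose_map_real, Matrix.mul_add, Matrix.add_mul]
      congr 1
      · rw [← map_mul', ← map_mul']
      · rw [mul_smul_comm, smul_mul_assoc, ← map_mul', ← map_mul', hS]
    rw [key]
    exact hpsd.mul_mul_conjTranspose_same _

lemma covMatrix_one {n : ℕ} (hn : n % 2 = 0) :
    IsCovMatrix (1 : Matrix (Fin n) (Fin n) ℝ) := by
  have hmap1 : (1 : Matrix (Fin n) (Fin n) ℝ).map Complex.ofReal = 1 :=
    Matrix.map_one _ (by simp) (by simp)
  set σc := (symplForm n).map Complex.ofReal with hσc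
  have hσT : σcᴴ = -σc := by
    rw [hσc, conjTranspose_map_real, symplForm_transpose]
    ext i j
    simp [Matrix.map_apply]
  have hσσ : σc * σc = -1 := by
    rw [hσc, ← map_mul', symplForm_sq hn]
    ext i j
    simp only [Matrix.map_apply, Matrix.neg_apply, Matrix.one_apply]
    split_ifs <;> simp
  set M := (1 : Matrix (Fin n) (Fin n) ℂ) + Complex.I • σc with hM
  have hherm : M.IsHermitian := by
    show Mᴴ = M
    rw [hM, Matrix.conjTranspose_add, Matrix.conjTranspose_one, Matrix.conjTranspose_smul, hσT]
    simp [Complex.star_def, Complex.conj_I]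
  have hsq : M * M = (2 : ℂ) • M := by
    rw [hM, Matrix.add_mul, Matrix.mul_add, Matrix.mul_add, Matrix.one_mul, Matrix.one_mul,
      Matrix.mul_one, smul_mul_assoc, mul_smul_comm, smul_smul, Complex.I_mul_I, hσσ, two_smul]
    simp only [neg_smul, smul_neg, neg_neg, one_smul]
    abel
  constructor
  · exact Matrix.isSymm_one
  · rw [hmap1]
    refine Matrix.PosSemidef.of_dotProduct_mulVec_nonneg hherm fun x => ?_
    have h2 := (Matrix.posSemidef_conjTranspose_mul_self M).dotProduct_mulVec_nonneg x
    rw [show Mᴴ = M from hherm, hsq, Matrix.smul_mulVec, dotProduct_smul,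
      smul_eq_mul] at h2
    rw [Complex.le_def] at h2 ⊢
    constructor
    · have := h2.1
      simp only [Complex.zero_re, Complex.mul_re, Complex.re_ofNat, Complex.im_ofNat] at this ⊢
      nlinarith [this]
    · have := h2.2
      simp only [Complex.zero_im, Complex.mul_im, Complex.re_ofNat, Complex.im_ofNat] at this ⊢
      nlinarith [this]







/-! ### block lemmas -/

lemma posSemidef_fromBlocks_diag {m n : ℕ} {A : Matrix (Fin m) (Fin m) ℂ}
    {B : Matrix (Fin n) (Fin n) ℂ} (hA : A.PosSemidef) (hB : B.PosSemidef) :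
    (Matrix.fromBlocks A 0 0 B).PosSemidef := by
  refine Matrix.PosSemidef.of_dotProduct_mulVec_nonneg ?_ ?_
  · show _ᴴ = _
    rw [Matrix.fromBlocks_conjTranspose]
    rw [show Aᴴ = A from hA.1, show Bᴴ = B from hB.1]
    simp
  · intro x
    have hx : x = Sum.elim (x ∘ Sum.inl) (x ∘ Sum.inr) := by
      funext s; cases s <;> rfl
    rw [hx, Matrix.fromBlocks_mulVec, Function.star_sumElim]
    simp only [Matrix.zero_mulVec, add_zero, zero_add]
    rw [sumElim_dotProduct_sumElim]
    exact add_nonneg (hA.dotProduct_mulVec_nonneg _) (hB.dotProduct_mulVec_nonneg _)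

lemma submatrix_eq_fromBlocks {m n : ℕ} (Z : Matrix (Fin (m + n)) (Fin (m + n)) ℝ) :
    Z.submatrix finSumFinEquiv finSumFinEquiv =
      Matrix.fromBlocks (Z.submatrix (Fin.castAdd n) (Fin.castAdd n))
        (Z.submatrix (Fin.castAdd n) (Fin.natAdd m))
        (Z.submatrix (Fin.natAdd m) (Fin.castAdd n))
        (Z.submatrix (Fin.natAdd m) (Fin.natAdd m)) := by
  ext (i | i) (j | j) <;>
    simp [Matrix.submatrix_apply, finSumFinEquiv_apply_left, finSumFinEquiv_apply_right]

lemma trace_fromBlocks' {p q : Type*} [Fintype p] [Fintype q] {R : Type*} [AddCommMonoid R]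
    (A : Matrix p p R) (B : Matrix p q R) (C : Matrix q p R) (D : Matrix q q R) :
    (Matrix.fromBlocks A B C D).trace = A.trace + D.trace := by
  simp [Matrix.trace, Fintype.sum_sum_type, Matrix.diag]

lemma trace_submatrix_equiv'' {p q : Type*} [Fintype p] [Fintype q] {R : Type*} [AddCommMonoid R]
    (M : Matrix q q R) (e : p ≃ q) : (M.submatrix e e).trace = M.trace := by
  simp only [Matrix.trace, Matrix.diag, Matrix.submatrix_apply]
  exact Equiv.sum_comp e (fun j => M j j)

lemma trace_mul_dirSum {m n : ℕ} (Z : Matrix (Fin (m + n)) (Fin (m + n)) ℝ)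
    (A : Matrix (Fin m) (Fin m) ℝ) (B : Matrix (Fin n) (Fin n) ℝ) :
    (Z * dirSum A B).trace = (Z.submatrix (Fin.castAdd n) (Fin.castAdd n) * A).trace
      + (Z.submatrix (Fin.natAdd m) (Fin.natAdd m) * B).trace := by
  have h0 : Z = (Z.submatrix finSumFinEquiv finSumFinEquiv).submatrix
      finSumFinEquiv.symm finSumFinEquiv.symm := by
    simp [Matrix.submatrix_submatrix]
  rw [dirSum, Matrix.reindex_apply]
  conv_lhs => rw [h0]
  rw [Matrix.submatrix_mul_equiv, trace_submatrix_equiv'', submatrix_eq_fromBlocks,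
    Matrix.fromBlocks_multiply, trace_fromBlocks']
  simp

lemma symplForm_dirSum (m n : ℕ) (hm : m % 2 = 0) :
    symplForm (m + n) = dirSum (symplForm m) (symplForm n) := by
  have key : (symplForm (m + n)).submatrix finSumFinEquiv finSumFinEquiv
      = Matrix.fromBlocks (symplForm m) 0 0 (symplForm n) := by
    ext (i | i) (j | j)
    · simp only [Matrix.submatrix_apply, finSumFinEquiv_apply_left,
        Matrix.fromBlocks_apply₁₁]
      by_cases c1 : (i : ℕ) + 1 = (j : ℕ) ∧ (i : ℕ) % 2 = 0
      · rw [symplForm_eq_one c1.1 c1.2,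
          symplForm_eq_one (i := Fin.castAdd n i) (j := Fin.castAdd n j) (by simpa using c1.1)
            (by simpa using c1.2)]
      · by_cases c2 : (j : ℕ) + 1 = (i : ℕ) ∧ (j : ℕ) % 2 = 0
        · rw [symplForm_eq_negone c2.1 c2.2,
            symplForm_eq_negone (i := Fin.castAdd n i) (j := Fin.castAdd n j)
              (by simpa using c2.1) (by simpa using c2.2)]
        · rw [symplForm_eq_zero c1 c2,
            symplForm_eq_zero (i := Fin.castAdd n i) (j := Fin.castAdd n j)
              (by simpa using c1) (by simpa using c2)]
    · simp only [Matrix.submatrix_apply, finSumFinEquiv_apply_left, finSumFinEquiv_apply_right,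
        Matrix.fromBlocks_apply₁₂, Matrix.zero_apply]
      have hi := i.isLt
      have hj := j.isLt
      rw [symplForm_eq_zero (i := Fin.castAdd n i) (j := Fin.natAdd m j)
        (by simp only [Fin.coe_castAdd, Fin.coe_natAdd]; omega)
        (by simp only [Fin.coe_castAdd, Fin.coe_natAdd]; omega)]
    · simp only [Matrix.submatrix_apply, finSumFinEquiv_apply_left, finSumFinEquiv_apply_right,
        Matrix.fromBlocks_apply₂₁, Matrix.zero_apply]
      have hi := i.isLt
      have hj := j.isLt
      rw [symplForm_eq_zero (i := Fin.natAdd m i) (j := Fin.castAdd n j)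
        (by simp only [Fin.coe_castAdd, Fin.coe_natAdd]; omega)
        (by simp only [Fin.coe_castAdd, Fin.coe_natAdd]; omega)]
    · simp only [Matrix.submatrix_apply, finSumFinEquiv_apply_right,
        Matrix.fromBlocks_apply₂₂]
      by_cases c1 : (i : ℕ) + 1 = (j : ℕ) ∧ (i : ℕ) % 2 = 0
      · rw [symplForm_eq_one c1.1 c1.2,
          symplForm_eq_one (i := Fin.natAdd m i) (j := Fin.natAdd m j)
            (by simp only [Fin.coe_natAdd]; omega) (by simp only [Fin.coe_natAdd]; omega)]
      · by_cases c2 : (j : ℕ) + 1 = (i : ℕ) ∧ (j : ℕ) % 2 = 0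
        · rw [symplForm_eq_negone c2.1 c2.2,
            symplForm_eq_negone (i := Fin.natAdd m i) (j := Fin.natAdd m j)
              (by simp only [Fin.coe_natAdd]; omega) (by simp only [Fin.coe_natAdd]; omega)]
        · rw [symplForm_eq_zero c1 c2,
            symplForm_eq_zero (i := Fin.natAdd m i) (j := Fin.natAdd m j)
              (by simp only [Fin.coe_natAdd]; omega) (by simp only [Fin.coe_natAdd]; omega)]
  have h2 := congrArg (fun M => Matrix.submatrix M
    (finSumFinEquiv (m := m) (n := n)).symm finSumFinEquiv.symm) key
  simp only [Matrix.submatrix_submatrix] at h2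
  rw [dirSum, Matrix.reindex_apply, ← h2]
  simp [Matrix.submatrix_submatrix, Equiv.self_comp_symm]

lemma covMatrix_dirSum {m n : ℕ} (hm : m % 2 = 0) {A : Matrix (Fin m) (Fin m) ℝ}
    {B : Matrix (Fin n) (Fin n) ℝ} (hA : IsCovMatrix A) (hB : IsCovMatrix B) :
    IsCovMatrix (dirSum A B) := by
  constructor
  · show _ᵀ = _
    rw [dirSum, Matrix.reindex_apply, Matrix.transpose_submatrix, Matrix.fromBlocks_transpose,
      show Aᵀ = A from hA.1, show Bᵀ = B from hB.1]
    simp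
  · have hmain : (dirSum A B).map Complex.ofReal
        + Complex.I • (symplForm (m + n)).map Complex.ofReal
        = (Matrix.fromBlocks
            (A.map Complex.ofReal + Complex.I • (symplForm m).map Complex.ofReal) 0 0
            (B.map Complex.ofReal + Complex.I • (symplForm n).map Complex.ofReal)).submatrix
            finSumFinEquiv.symm finSumFinEquiv.symm := by
      rw [symplForm_dirSum m n hm]
      rw [dirSum, dirSum, Matrix.reindex_apply, Matrix.reindex_apply]
      ext i j
      rcases h1 : finSumFinEquiv.symm i with a | a <;> rcases h2 : finSumFinEquiv.symm j with b | b <;>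
        simp [h1, h2, Matrix.submatrix_apply, Matrix.map_apply, Matrix.add_apply,
          Matrix.smul_apply, Matrix.fromBlocks_apply₁₁, Matrix.fromBlocks_apply₁₂,
          Matrix.fromBlocks_apply₂₁, Matrix.fromBlocks_apply₂₂, smul_eq_mul]
    rw [hmain]
    exact (posSemidef_fromBlocks_diag hA.2 hB.2).submatrix _







/-! ### pairing sums -/

def loIdx {N : ℕ} (j : Fin N) : Fin (2 * N) := ⟨2 * (j : ℕ), by have := j.isLt; omega⟩
def hiIdx {N : ℕ} (j : Fin N) : Fin (2 * N) := ⟨2 * (j : ℕ) + 1, by have := j.isLt; omega⟩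

lemma sum_range_two_mul (N : ℕ) (f : ℕ → ℝ) :
    ∑ k ∈ Finset.range (2 * N), f k = ∑ j ∈ Finset.range N, (f (2 * j) + f (2 * j + 1)) := by
  induction N with
  | zero => simp
  | succ n ih =>
    rw [Finset.sum_range_succ, ← ih, show 2 * (n + 1) = (2 * n + 1) + 1 by ring,
      Finset.sum_range_succ, Finset.sum_range_succ]
    ring

lemma fin_sum_pair {N : ℕ} (g : Fin (2 * N) → ℝ) :
    ∑ k, g k = ∑ j : Fin N, (g (loIdx j) + g (hiIdx j)) := by
  classical
  set f : ℕ → ℝ := fun k => if h : k < 2 * N then g ⟨k, h⟩ else 0 with hf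
  have h1 : ∑ k, g k = ∑ k ∈ Finset.range (2 * N), f k := by
    rw [← Fin.sum_univ_eq_sum_range]
    refine Finset.sum_congr rfl fun k _ => ?_
    simp only [hf]
    rw [dif_pos k.isLt]
  have h2 : ∑ j : Fin N, (g (loIdx j) + g (hiIdx j))
      = ∑ j ∈ Finset.range N, (f (2 * j) + f (2 * j + 1)) := by
    rw [← Fin.sum_univ_eq_sum_range]
    refine Finset.sum_congr rfl fun j _ => ?_
    have hj := j.isLt
    simp only [hf]
    rw [dif_pos (by omega : 2 * (j : ℕ) < 2 * N), dif_pos (by omega : 2 * (j : ℕ) + 1 < 2 * N)]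
    rfl
  rw [h1, h2, sum_range_two_mul]

lemma trace_WDiag {N : ℕ} (a : Fin N → ℝ) : (WDiag a).trace = 2 * ∑ i, a i := by
  rw [WDiag, Matrix.trace_diagonal]
  rw [fin_sum_pair (fun k => a ⟨(k : ℕ) / 2, by have := k.isLt; omega⟩)]
  rw [Finset.mul_sum]
  refine Finset.sum_congr rfl fun j _ => ?_
  have hlo : ((loIdx j : Fin (2 * N)) : ℕ) = 2 * (j : ℕ) := rfl
  have hhi : ((hiIdx j : Fin (2 * N)) : ℕ) = 2 * (j : ℕ) + 1 := rfl
  have e1 : ∀ h : ((loIdx j : Fin (2 * N)) : ℕ) / 2 < N,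
      (⟨((loIdx j : Fin (2 * N)) : ℕ) / 2, h⟩ : Fin N) = j := fun h =>
    Fin.ext (by show ((loIdx j : Fin (2 * N)) : ℕ) / 2 = (j : ℕ); rw [hlo]; omega)
  have e2 : ∀ h : ((hiIdx j : Fin (2 * N)) : ℕ) / 2 < N,
      (⟨((hiIdx j : Fin (2 * N)) : ℕ) / 2, h⟩ : Fin N) = j := fun h =>
    Fin.ext (by show ((hiIdx j : Fin (2 * N)) : ℕ) / 2 = (j : ℕ); rw [hhi]; omega)
  rw [e1, e2]
  ring

/-! ### the per-mode bound -/

lemma cov_pair_bound {N : ℕ} {γ : Matrix (Fin (2 * N)) (Fin (2 * N)) ℝ}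
    (hγ : IsCovMatrix γ) (j : Fin N) :
    2 ≤ γ (loIdx j) (loIdx j) + γ (hiIdx j) (hiIdx j) := by
  obtain ⟨hsym, hpsd⟩ := hγ
  set i0 : Fin (2 * N) := loIdx j with hi0
  set i1 : Fin (2 * N) := hiIdx j with hi1
  have hv0 : (i0 : ℕ) = 2 * (j : ℕ) := rfl
  have hv1 : (i1 : ℕ) = 2 * (j : ℕ) + 1 := rfl
  have hne : i0 ≠ i1 := by
    intro hc
    have : (i0 : ℕ) = (i1 : ℕ) := by rw [hc]
    omega
  have hσ00 : symplForm (2 * N) i0 i0 = 0 := symplForm_eq_zero (by omega) (by omega)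
  have hσ11 : symplForm (2 * N) i1 i1 = 0 := symplForm_eq_zero (by omega) (by omega)
  have hσ01 : symplForm (2 * N) i0 i1 = 1 := symplForm_eq_one (by omega) (by omega)
  have hσ10 : symplForm (2 * N) i1 i0 = -1 := symplForm_eq_negone (by omega) (by omega)
  have hγ10 : γ i1 i0 = γ i0 i1 := by
    have := congrFun (congrFun hsym i0) i1
    simpa using this
  set v : Fin (2 * N) → ℂ := Pi.single i0 1 + Pi.single i1 Complex.I with hv
  have hstar : star v = Pi.single i0 1 + Pi.single i1 (-Complex.I) := by
    funext k
    rcases eq_or_ne k i0 with hk | hk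
    · subst hk
      simp [hv, Pi.single_apply, hne, Complex.conj_I]
    · rcases eq_or_ne k i1 with hk1 | hk1
      · subst hk1
        simp [hv, Pi.single_apply, Ne.symm hne, Complex.conj_I]
      · simp [hv, Pi.single_apply, hk, hk1, Ne.symm hk, Ne.symm hk1]
  have h := hpsd.dotProduct_mulVec_nonneg v
  rw [hstar] at h
  simp only [hv, Matrix.mulVec_add, Matrix.mulVec_single, add_dotProduct,
    single_dotProduct, Pi.add_apply, Pi.smul_apply, op_smul_eq_mul, Matrix.col_apply, Matrix.add_apply, Matrix.map_apply,
    Matrix.smul_apply, smul_eq_mul, hσ00, hσ11, hσ01, hσ10, hγ10, mul_one, one_mul] at h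
  rw [Complex.le_def] at h
  have h1 := h.1
  simp only [Complex.zero_re, Complex.add_re, Complex.mul_re, Complex.mul_im, Complex.add_im,
    Complex.I_re, Complex.I_im, Complex.ofReal_re, Complex.ofReal_im, Complex.neg_re,
    Complex.neg_im, Complex.ofReal_neg, Complex.one_re, Complex.one_im, Complex.zero_im] at h1
  ring_nf at h1
  nlinarith [h1]

/-! ### trace positivity -/

lemma psd_trace_nonneg {n : ℕ} {M : Matrix (Fin n) (Fin n) ℝ} (h : M.PosSemidef) :
    0 ≤ M.trace := by
  rw [Matrix.trace]
  refine Finset.sum_nonneg fun i _ => ?_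
  have := h.dotProduct_mulVec_nonneg (Pi.single i 1)
  simpa [Matrix.mulVec_single, single_dotProduct] using this

lemma trace_mul_nonneg' {n : ℕ} {Z M : Matrix (Fin n) (Fin n) ℝ}
    (hZ : Z.PosSemidef) (hM : M.PosSemidef) : 0 ≤ (Z * M).trace := by
  open scoped MatrixOrder in
  obtain ⟨B, rfl⟩ := CStarAlgebra.nonneg_iff_eq_star_mul_self.mp hZ.nonneg
  rw [Matrix.star_eq_conjTranspose, Matrix.mul_assoc, Matrix.trace_mul_comm]
  exact psd_trace_nonneg (hM.mul_mul_conjTranspose_same B)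

/-! ### the key bound -/

lemma trace_mul_cov_ge {N : ℕ} {Zm S : Matrix (Fin (2 * N)) (Fin (2 * N)) ℝ} {z : Fin N → ℝ}
    (hS : IsSymplectic S) (hz : ∀ i, 0 < z i) (hW : S * Zm * Sᵀ = WDiag z)
    {γ : Matrix (Fin (2 * N)) (Fin (2 * N)) ℝ} (hγ : IsCovMatrix γ) :
    2 * ∑ i, z i ≤ (Zm * γ).trace := by
  have hn : (2 * N) % 2 = 0 := by omega
  set T := sInv S with hT
  have hST : S * T = 1 := sympl_mul_sInv hn hS
  have hTS : T * S = 1 := sympl_sInv_mul hn hS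
  have hTt : IsSymplectic Tᵀ := sympl_transpose hn (sympl_sInv hn hS)
  have hZ : Zm = T * WDiag z * Tᵀ := by
    have h1 : T * (S * Zm * Sᵀ) * Tᵀ = T * WDiag z * Tᵀ := by rw [hW]
    rw [← h1]
    have h2 : T * (S * Zm * Sᵀ) * Tᵀ = (T * S) * Zm * (T * S)ᵀ := by
      rw [Matrix.transpose_mul]
      simp only [Matrix.mul_assoc]
    rw [h2, hTS]
    simp
  set γ' := Tᵀ * γ * T with hγ'
  have hγ'cov : IsCovMatrix γ' := by
    have := covMatrix_congruence hTt hγ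
    rwa [Matrix.transpose_transpose] at this
  have htr : (Zm * γ).trace = (WDiag z * γ').trace := by
    rw [hZ]
    rw [show T * WDiag z * Tᵀ * γ = (T * WDiag z) * (Tᵀ * γ) from by simp only [Matrix.mul_assoc]]
    rw [Matrix.trace_mul_comm]
    rw [show Tᵀ * γ * (T * WDiag z) = (Tᵀ * γ * T) * WDiag z from by simp only [Matrix.mul_assoc]]
    rw [Matrix.trace_mul_comm, hγ']
  have hdiag : (WDiag z * γ').trace
      = ∑ k : Fin (2 * N), z ⟨(k : ℕ) / 2, by have := k.isLt; omega⟩ * γ' k k := by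
    rw [WDiag]
    simp [Matrix.trace, Matrix.diag, Matrix.diagonal_mul]
  rw [htr, hdiag,
    fin_sum_pair (fun k => z ⟨(k : ℕ) / 2, by have := k.isLt; omega⟩ * γ' k k)]
  rw [mul_comm, Finset.sum_mul]
  refine Finset.sum_le_sum fun j _ => ?_
  have hlo : ((loIdx j : Fin (2 * N)) : ℕ) = 2 * (j : ℕ) := rfl
  have hhi : ((hiIdx j : Fin (2 * N)) : ℕ) = 2 * (j : ℕ) + 1 := rfl
  have e1 : ∀ h : ((loIdx j : Fin (2 * N)) : ℕ) / 2 < N,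
      (⟨((loIdx j : Fin (2 * N)) : ℕ) / 2, h⟩ : Fin N) = j := fun h =>
    Fin.ext (by show ((loIdx j : Fin (2 * N)) : ℕ) / 2 = (j : ℕ); rw [hlo]; omega)
  have e2 : ∀ h : ((hiIdx j : Fin (2 * N)) : ℕ) / 2 < N,
      (⟨((hiIdx j : Fin (2 * N)) : ℕ) / 2, h⟩ : Fin N) = j := fun h =>
    Fin.ext (by show ((hiIdx j : Fin (2 * N)) : ℕ) / 2 = (j : ℕ); rw [hhi]; omega)
  rw [e1, e2]
  have hpair := cov_pair_bound hγ'cov j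
  nlinarith [hz j, hpair]


/-- Characterization of bipartite entanglement witnesses by the symplectic traces of the
reduced blocks. -/
theorem bipartite_witness_characterization (NA NB : ℕ) (hNA : 1 ≤ NA) (hNB : 1 ≤ NB)
    (Z : Matrix (Fin (2 * NA + 2 * NB)) (Fin (2 * NA + 2 * NB)) ℝ)
    (hZsymm : Z.IsSymm) (hZpos : Z.PosDef)
    (SA : Matrix (Fin (2 * NA)) (Fin (2 * NA)) ℝ) (zA : Fin NA → ℝ)
    (SB : Matrix (Fin (2 * NB)) (Fin (2 * NB)) ℝ) (zB : Fin NB → ℝ)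
    (hSA : IsSymplectic SA) (hzA : ∀ i, 0 < zA i)
    (hWA : SA * Z.submatrix (Fin.castAdd (2 * NB)) (Fin.castAdd (2 * NB)) * SAᵀ = WDiag zA)
    (hSB : IsSymplectic SB) (hzB : ∀ j, 0 < zB j)
    (hWB : SB * Z.submatrix (Fin.natAdd (2 * NA)) (Fin.natAdd (2 * NA)) * SBᵀ = WDiag zB) :
    (∀ γ : Matrix (Fin (2 * NA + 2 * NB)) (Fin (2 * NA + 2 * NB)) ℝ,
        IsCovMatrix γ → IsSepCov (2 * NA) (2 * NB) γ → 1 ≤ (Z * γ).trace) ↔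
      (1 / 2 : ℝ) ≤ (∑ i, zA i) + ∑ j, zB j := by
  constructor
  · -- forward: apply the witness property to the product state `SAᵀSA ⊕ SBᵀSB`
    intro H
    have hmA : (2 * NA) % 2 = 0 := by omega
    have hmB : (2 * NB) % 2 = 0 := by omega
    have hcovA : IsCovMatrix (SAᵀ * SA) := by
      have := covMatrix_congruence (sympl_transpose hmA hSA) (covMatrix_one hmA)
      rwa [Matrix.mul_one, Matrix.transpose_transpose] at this
    have hcovB : IsCovMatrix (SBᵀ * SB) := by
      have := covMatrix_congruence (sympl_transpose hmB hSB) (covMatrix_one hmB)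
      rwa [Matrix.mul_one, Matrix.transpose_transpose] at this
    set γ0 := dirSum (SAᵀ * SA) (SBᵀ * SB) with hγ0
    have hcov0 : IsCovMatrix γ0 := covMatrix_dirSum hmA hcovA hcovB
    have hsep : IsSepCov (2 * NA) (2 * NB) γ0 := by
      refine ⟨SAᵀ * SA, SBᵀ * SB, hcovA, hcovB, ?_⟩
      rw [hγ0, sub_self]
      exact ⟨Matrix.isHermitian_zero, fun x => by simp⟩
    have h1 := H γ0 hcov0 hsep
    rw [hγ0, trace_mul_dirSum] at h1
    have tA : (Z.submatrix (Fin.castAdd (2 * NB)) (Fin.castAdd (2 * NB)) * (SAᵀ * SA)).trace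
        = 2 * ∑ i, zA i := by
      rw [← Matrix.mul_assoc, Matrix.trace_mul_cycle, hWA, trace_WDiag]
    have tB : (Z.submatrix (Fin.natAdd (2 * NA)) (Fin.natAdd (2 * NA)) * (SBᵀ * SB)).trace
        = 2 * ∑ j, zB j := by
      rw [← Matrix.mul_assoc, Matrix.trace_mul_cycle, hWB, trace_WDiag]
    rw [tA, tB] at h1
    linarith
  · -- backward: every separable state dominates a product state
    intro hsum γ hγ hsep
    obtain ⟨γA, γB, hγA, hγB, hsub⟩ := hsep
    have h1 : 0 ≤ (Z * (γ - dirSum γA γB)).trace :=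
      trace_mul_nonneg' hZpos.posSemidef hsub
    have h2 : (Z * γ).trace = (Z * (γ - dirSum γA γB)).trace + (Z * dirSum γA γB).trace := by
      rw [Matrix.mul_sub, Matrix.trace_sub]
      ring
    have h3 := trace_mul_dirSum Z γA γB
    have h4 : 2 * ∑ i, zA i ≤
        (Z.submatrix (Fin.castAdd (2 * NB)) (Fin.castAdd (2 * NB)) * γA).trace :=
      trace_mul_cov_ge hSA hzA hWA hγA
    have h5 : 2 * ∑ j, zB j ≤
        (Z.submatrix (Fin.natAdd (2 * NA)) (Fin.natAdd (2 * NA)) * γB).trace :=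
      trace_mul_cov_ge hSB hzB hWB hγB
    rw [h2, h3]
    linarith
end
end

section
/- Duan criterion (necessity) on covariance matrices: let γ be a 4×4 covariance matrix (two modes, ordering x₁,p₁,x₂,p₂) that is separable with respect to the split of the first mode versus the second mode. Then for every real number a ≠ 0, (a²/2)·(γ₁₁ + γ₂₂) + (1/(2a²))·(γ₃₃ + γ₄₄) + (|a|/a)·(γ₁₃ − γ₂₄) ≥ a² + 1/a². -/
open Matrix Polynomial
open ComplexOrder

noncomputable section

/-! Testing `γ_A + iσ` against the vector `(1, i)` gives the uncertainty bound `tr γ_A ≥ 2` for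
every single-mode covariance matrix. If `γ ≥ γ_A ⊕ γ_B`, testing this on `(x, 0, y, 0)` and
`(0, x, 0, -y)` bounds `x² (γ₁₁ + γ₂₂) + y² (γ₃₃ + γ₄₄) + 2xy (γ₁₃ - γ₂₄)` from below by
`x² tr γ_A + y² tr γ_B ≥ 2x² + 2y²`; the criterion is the case `x = a`, `y = sgn a / a`. -/

theorem dirSum_isSymm {m n : ℕ} {A : Matrix (Fin m) (Fin m) ℝ} {B : Matrix (Fin n) (Fin n) ℝ}
    (hA : A.IsSymm) (hB : B.IsSymm) : (dirSum A B).IsSymm :=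
  (hA.fromBlocks transpose_zero hB).reindex _

theorem IsSepCov.isSymm {nA nB : ℕ} {γ : Matrix (Fin (nA + nB)) (Fin (nA + nB)) ℝ}
    (h : IsSepCov nA nB γ) : γ.IsSymm := by
  obtain ⟨γA, γB, hA, hB, hM⟩ := h
  simpa using (isHermitian_iff_isSymm.mp hM.isHermitian).add (dirSum_isSymm hA.1 hB.1)

theorem append_dotProduct_dirSum_mulVec_append {m n : ℕ} (A : Matrix (Fin m) (Fin m) ℝ)
    (B : Matrix (Fin n) (Fin n) ℝ) (x : Fin m → ℝ) (y : Fin n → ℝ) :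
    Fin.append x y ⬝ᵥ dirSum A B *ᵥ Fin.append x y = x ⬝ᵥ A *ᵥ x + y ⬝ᵥ B *ᵥ y := by
  have hxy : Fin.append x y = Sum.elim x y ∘ finSumFinEquiv.symm := by
    ext i
    obtain ⟨j | j, rfl⟩ := finSumFinEquiv.surjective i <;> simp
  rw [dirSum, reindex_apply, hxy, submatrix_mulVec_equiv, Equiv.symm_symm]
  simp [Function.comp_assoc, fromBlocks_mulVec, sumElim_dotProduct_sumElim]

theorem IsCovMatrix.two_le_trace {g : Matrix (Fin 2) (Fin 2) ℝ} (h : IsCovMatrix g) :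
    2 ≤ g.trace := by
  have hp := (Complex.le_def.mp (h.2.dotProduct_mulVec_nonneg ![1, Complex.I])).1
  simp [mulVec, dotProduct, Fin.sum_univ_two, symplForm] at hp
  rw [trace_fin_two]
  linarith

theorem dotProduct_mulVec_le_of_posSemidef_sub {n : Type*} [Fintype n] {M N : Matrix n n ℝ}
    (h : (M - N).PosSemidef) (v : n → ℝ) : v ⬝ᵥ N *ᵥ v ≤ v ⬝ᵥ M *ᵥ v := by
  have hv := h.dotProduct_mulVec_nonneg v
  rw [star_trivial, sub_mulVec, dotProduct_sub, sub_nonneg] at hv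
  exact hv

theorem IsSepCov.two_mul_sq_add_two_mul_sq_le {γ : Matrix (Fin 4) (Fin 4) ℝ}
    (hsep : IsSepCov 2 2 γ) (x y : ℝ) :
    2 * x ^ 2 + 2 * y ^ 2 ≤
      x ^ 2 * (γ 0 0 + γ 1 1) + y ^ 2 * (γ 2 2 + γ 3 3) + 2 * x * y * (γ 0 2 - γ 1 3) := by
  have hγ := hsep.isSymm
  obtain ⟨γA, γB, hA, hB, hM⟩ := hsep
  have hu := dotProduct_mulVec_le_of_posSemidef_sub hM (Fin.append ![x, 0] ![y, 0])
  have hw := dotProduct_mulVec_le_of_posSemidef_sub hM (Fin.append ![0, x] ![0, -y])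
  rw [append_dotProduct_dirSum_mulVec_append] at hu hw
  have hu' : Fin.append ![x, 0] ![y, 0] = ![x, 0, y, 0] := by ext i; fin_cases i <;> rfl
  have hw' : Fin.append ![0, x] ![0, -y] = ![0, x, 0, -y] := by ext i; fin_cases i <;> rfl
  have hA2 := mul_le_mul_of_nonneg_left hA.two_le_trace (sq_nonneg x)
  have hB2 := mul_le_mul_of_nonneg_left hB.two_le_trace (sq_nonneg y)
  simp [hu', hw', mulVec, dotProduct, Fin.sum_univ_two, Fin.sum_univ_four, trace_fin_two,
    hγ.apply 0 2, hγ.apply 1 3] at hu hw hA2 hB2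
  linarith

theorem duan_criterion_necessity_general (γ : Matrix (Fin 4) (Fin 4) ℝ)
    (hsep : IsSepCov 2 2 γ) :
    ∀ a : ℝ, a ≠ 0 →
      a ^ 2 + 1 / a ^ 2 ≤
        (a ^ 2 / 2) * (γ 0 0 + γ 1 1) + (1 / (2 * a ^ 2)) * (γ 2 2 + γ 3 3) +
          (|a| / a) * (γ 0 2 - γ 1 3) := by
  intro a ha
  set s := |a| / a
  have hs : s ^ 2 = 1 := by rw [div_pow, sq_abs, div_self (pow_ne_zero 2 ha)]
  have h := hsep.two_mul_sq_add_two_mul_sq_le a (s / a)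
  rw [mul_assoc 2 a, mul_div_cancel₀ s ha, div_pow, hs] at h
  rw [show 1 / (2 * a ^ 2) = 1 / a ^ 2 / 2 by ring]
  linarith

/-- Duan criterion (necessity) on two-mode covariance matrices. -/
theorem duan_criterion_necessity (γ : Matrix (Fin 4) (Fin 4) ℝ)
    (hγ : IsCovMatrix γ) (hsep : IsSepCov 2 2 γ) :
    ∀ a : ℝ, a ≠ 0 →
      a ^ 2 + 1 / a ^ 2 ≤
        (a ^ 2 / 2) * (γ 0 0 + γ 1 1) + (1 / (2 * a ^ 2)) * (γ 2 2 + γ 3 3) +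
          (|a| / a) * (γ 0 2 - γ 1 3) :=
  duan_criterion_necessity_general γ hsep
end
end
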